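/- Projection property of least Frobenius norm updating: let X ⊂ ℝⁿ be an interpolation set and let Q_α be a quadratic. Suppose Q* is a minimizer of ‖∇²Q − ∇²Q_α‖_F² over all quadratics Q satisfying Q(x) = f(x) for all x ∈ X, where f itself is a quadratic function. Then ‖∇²Q* − ∇²f‖_F ≤ ‖∇²Q_α − ∇²f‖_F. -/

import Mathlib

structure Quad (n : ℕ) where
  c : ℝ
  g : Fin n → ℝ
  A : Matrix (Fin n) (Fin n) ℝ
  symm : A.IsSymm

namespace Quad
variable {n : ℕ}

noncomputable def eval (Q : Quad n) (x : Fin n → ℝ) : ℝ :=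
  Q.c + (∑ i, Q.g i * x i) + (1 / 2) * ∑ i, ∑ j, x i * Q.A i j * x j

def add (P Q : Quad n) : Quad n :=
  ⟨P.c + Q.c, P.g + Q.g, P.A + Q.A, P.symm.add Q.symm⟩

def sub (P Q : Quad n) : Quad n :=
  ⟨P.c - Q.c, P.g - Q.g, P.A - Q.A, P.symm.sub Q.symm⟩

def smul (r : ℝ) (Q : Quad n) : Quad n :=
  ⟨r * Q.c, r • Q.g, r • Q.A, by
    simp only [Matrix.IsSymm, Matrix.transpose_smul, Q.symm.eq]⟩

def addConst (Q : Quad n) (r : ℝ) : Quad n := ⟨Q.c + r, Q.g, Q.A, Q.symm⟩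

protected def zero : Quad n := ⟨0, 0, 0, by simp [Matrix.IsSymm]⟩

end Quad

noncomputable def frobSq {n : ℕ} (M : Matrix (Fin n) (Fin n) ℝ) : ℝ := ∑ i, ∑ j, (M i j) ^ 2

def Interpolates {n m : ℕ} (Q : Quad n) (h : (Fin n → ℝ) → ℝ)
    (x : Fin m → (Fin n → ℝ)) : Prop :=
  ∀ i, Q.eval (x i) = h (x i)

def IsLFNModel {n m : ℕ} (B : Quad n) (h : (Fin n → ℝ) → ℝ)
    (x : Fin m → (Fin n → ℝ)) (Q : Quad n) : Prop :=
  Interpolates Q h x ∧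
    ∀ Q' : Quad n, Interpolates Q' h x → frobSq (Q.A - B.A) ≤ frobSq (Q'.A - B.A)

/-!
The Hessians of quadratics interpolating `f` on `X` form an affine set which contains `∇²f`,
since `f` interpolates itself. Hence every point of the segment from `∇²Q*` towards `∇²f` is
feasible, and minimality of `Q*` along that segment forces
`⟪∇²Q* - ∇²Q_α, ∇²f - ∇²Q*⟫_F ≥ 0`. Expanding `‖∇²Q_α - ∇²f‖_F²` around `∇²Q*` then gives the
inequality.
-/

open RealInnerProductSpace Filter Topology

section InnerProductSpace

variable {E : Type*} [NormedAddCommGroup E] [InnerProductSpace ℝ E]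

theorem real_inner_nonneg_of_forall_norm_le_norm_add_smul {u v : E}
    (h : ∀ t : ℝ, 0 < t → ‖u‖ ≤ ‖u + t • v‖) : 0 ≤ ⟪u, v⟫ := by
  have hslope : ∀ t : ℝ, 0 < t → 0 ≤ 2 * ⟪u, v⟫ + t * ‖v‖ ^ 2 := fun t ht => by
    have hsq := pow_le_pow_left₀ (norm_nonneg _) (h t ht) 2
    rw [norm_add_sq_real, real_inner_smul_right, norm_smul, Real.norm_of_nonneg ht.le] at hsq
    nlinarith
  have hlim : Tendsto (fun t : ℝ => 2 * ⟪u, v⟫ + t * ‖v‖ ^ 2) (𝓝[>] 0)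
      (𝓝 (2 * ⟪u, v⟫ + 0 * ‖v‖ ^ 2)) :=
    ((continuous_const.add (continuous_id.mul continuous_const)).tendsto 0).mono_left
      nhdsWithin_le_nhds
  have hlimit := ge_of_tendsto hlim (eventually_nhdsWithin_of_forall hslope)
  linarith

theorem norm_le_norm_add_of_real_inner_nonneg {u v : E} (h : 0 ≤ ⟪u, v⟫) :
    ‖v‖ ≤ ‖u + v‖ := by
  rw [← sq_le_sq₀ (norm_nonneg _) (norm_nonneg _), norm_add_sq_real]
  nlinarith [sq_nonneg ‖u‖]

theorem norm_sub_le_norm_sub_of_forall_norm_sub_le {a b p : E}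
    (h : ∀ t : ℝ, 0 < t → ‖p - a‖ ≤ ‖p + t • (b - p) - a‖) : ‖p - b‖ ≤ ‖a - b‖ := by
  have hinner : 0 ≤ ⟪p - a, b - p⟫ :=
    real_inner_nonneg_of_forall_norm_le_norm_add_smul fun t ht => by
      simpa only [add_sub_right_comm] using h t ht
  calc ‖p - b‖ = ‖b - p‖ := norm_sub_rev p b
    _ ≤ ‖p - a + (b - p)‖ := norm_le_norm_add_of_real_inner_nonneg hinner
    _ = ‖a - b‖ := by rw [sub_add_sub_cancel', norm_sub_rev]

end InnerProductSpace

namespace Quad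

variable {n : ℕ}

@[simp] theorem add_A (P Q : Quad n) : (P.add Q).A = P.A + Q.A := rfl

@[simp] theorem sub_A (P Q : Quad n) : (P.sub Q).A = P.A - Q.A := rfl

@[simp] theorem smul_A (r : ℝ) (Q : Quad n) : (smul r Q).A = r • Q.A := rfl

theorem eval_add (P Q : Quad n) (y : Fin n → ℝ) : (P.add Q).eval y = P.eval y + Q.eval y := by
  simp only [eval, add, Pi.add_apply, Matrix.add_apply, mul_add, add_mul,
    Finset.sum_add_distrib]
  ring

theorem eval_sub (P Q : Quad n) (y : Fin n → ℝ) : (P.sub Q).eval y = P.eval y - Q.eval y := by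
  simp only [eval, sub, Pi.sub_apply, Matrix.sub_apply, mul_sub, sub_mul,
    Finset.sum_sub_distrib]
  ring

theorem eval_smul (r : ℝ) (Q : Quad n) (y : Fin n → ℝ) : (smul r Q).eval y = r * Q.eval y := by
  simp only [eval, smul, Pi.smul_apply, Matrix.smul_apply, smul_eq_mul, mul_add, Finset.mul_sum]
  congr 2 <;> simp only [mul_assoc, mul_left_comm]

end Quad

theorem Interpolates.add_smul_sub {n m : ℕ} {P Q : Quad n} {h : (Fin n → ℝ) → ℝ}
    {x : Fin m → (Fin n → ℝ)} (hP : Interpolates P h x) (hQ : Interpolates Q h x) (t : ℝ) :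
    Interpolates (P.add (Quad.smul t (Q.sub P))) h x := fun i => by
  rw [Quad.eval_add, Quad.eval_smul, Quad.eval_sub, hP i, hQ i]
  ring

def Matrix.frobeniusVec {m n : Type*} :
    Matrix m n ℝ →ₗ[ℝ] EuclideanSpace ℝ (m × n) where
  toFun M := WithLp.toLp 2 fun ij => M ij.1 ij.2
  map_add' _ _ := rfl
  map_smul' _ _ := rfl

theorem frobSq_eq_norm_frobeniusVec_sq {n : ℕ} (M : Matrix (Fin n) (Fin n) ℝ) :
    frobSq M = ‖M.frobeniusVec‖ ^ 2 := by
  rw [EuclideanSpace.real_norm_sq_eq, Fintype.sum_prod_type]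
  rfl

theorem frobSq_le_frobSq_iff {n : ℕ} {M N : Matrix (Fin n) (Fin n) ℝ} :
    frobSq M ≤ frobSq N ↔ ‖M.frobeniusVec‖ ≤ ‖N.frobeniusVec‖ := by
  rw [frobSq_eq_norm_frobeniusVec_sq, frobSq_eq_norm_frobeniusVec_sq,
    sq_le_sq₀ (norm_nonneg _) (norm_nonneg _)]

/-- Projection property of the least Frobenius norm updating model: if `f` is
itself a quadratic and `Q*` minimizes `‖∇²Q − ∇²Q_α‖_F` among quadratics
interpolating `f` on `X`, then `‖∇²Q* − ∇²f‖_F ≤ ‖∇²Q_α − ∇²f‖_F`. -/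
theorem lfn_updating_projection_property
    {n m : ℕ} (x : Fin m → (Fin n → ℝ)) (Qα f Qstar : Quad n)
    (h₁ : Interpolates Qstar f.eval x)
    (h₂ : ∀ Q' : Quad n, Interpolates Q' f.eval x →
      frobSq (Qstar.A - Qα.A) ≤ frobSq (Q'.A - Qα.A)) :
    Real.sqrt (frobSq (Qstar.A - f.A)) ≤ Real.sqrt (frobSq (Qα.A - f.A)) := by
  refine Real.sqrt_le_sqrt ?_
  rw [frobSq_le_frobSq_iff, map_sub, map_sub]
  refine norm_sub_le_norm_sub_of_forall_norm_sub_le fun t _ => ?_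
  have hmin := h₂ _ (h₁.add_smul_sub (fun _ => rfl) t)
  simpa only [frobSq_le_frobSq_iff, Quad.add_A, Quad.smul_A, Quad.sub_A, map_add, map_sub,
    map_smul] using hmin
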